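/- arXiv:1612.03349 — 2 statements merged into one kernel-verified Lean document; each statement's English description precedes it below -/
import Mathlib

section
/- The hard-thresholding operator solves the ℓ0 proximal problem: for t > 0 and z ∈ ℝ, the set of minimizers of x ↦ ‖x‖₀ + (1/(2t))(x - z)² (where ‖x‖₀ = 0 if x = 0 and 1 otherwise) contains hard(z,t) := z if |z| > √(2t), and 0 if |z| ≤ √(2t). -/
/-- hard-thresholding solves the scalar ℓ0 proximal problem. -/
theorem hard_threshold_minimizes (t z : ℝ) (ht : 0 < t) :
    let l0 : ℝ → ℝ := fun x => if x = 0 then 0 else 1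
    let f : ℝ → ℝ := fun x => l0 x + (1 / (2 * t)) * (x - z) ^ 2
    let hard : ℝ := if |z| > Real.sqrt (2 * t) then z else 0
    ∀ x : ℝ, f hard ≤ f x := by
  intro l0 f hard x
  have h2t : (0:ℝ) < 2 * t := by linarith
  have hsq : Real.sqrt (2 * t) ^ 2 = 2 * t := Real.sq_sqrt h2t.le
  have hpos : (0:ℝ) < 1 / (2 * t) := by positivity
  simp only [f, l0, hard]
  by_cases hz : |z| > Real.sqrt (2 * t)
  · -- hard = z; f z = l0 z ≤ 1
    simp only [if_pos hz]
    have hz2 : 2 * t < z ^ 2 := by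
      calc 2 * t = Real.sqrt (2 * t) ^ 2 := hsq.symm
        _ < |z| ^ 2 := by
            apply pow_lt_pow_left₀ hz (Real.sqrt_nonneg _) (by norm_num)
        _ = z ^ 2 := sq_abs z
    by_cases hx : x = 0
    · subst hx
      simp only [if_pos rfl]
      have h1 : (1 / (2 * t)) * (0 - z) ^ 2 > 1 := by
        rw [div_mul_eq_mul_div, one_mul]
        rw [gt_iff_lt, lt_div_iff₀ h2t]
        simpa using hz2
      have : (if z = 0 then (0:ℝ) else 1) ≤ 1 := by split <;> norm_num
      simp only [if_true]
      nlinarith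
    · simp only [if_neg hx]
      have : (if z = 0 then (0:ℝ) else 1) ≤ 1 := by split <;> norm_num
      nlinarith [sq_nonneg (x - z), mul_nonneg hpos.le (sq_nonneg (x - z))]
  · -- hard = 0; f 0 = z²/(2t) ≤ 1 ≤ f x for x ≠ 0
    simp only [if_neg hz]
    push_neg at hz
    have hz2 : z ^ 2 ≤ 2 * t := by
      calc z ^ 2 = |z| ^ 2 := (sq_abs z).symm
        _ ≤ Real.sqrt (2 * t) ^ 2 := pow_le_pow_left₀ (abs_nonneg z) hz 2
        _ = 2 * t := hsq
    by_cases hx : x = 0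
    · subst hx; simp
    · simp only [if_pos rfl, if_neg hx]
      have h1 : (1 / (2 * t)) * (0 - z) ^ 2 ≤ 1 := by
        rw [div_mul_eq_mul_div, one_mul, div_le_one h2t]
        simpa using hz2
      simp only [if_true]
      nlinarith [mul_nonneg hpos.le (sq_nonneg (x - z))]
end

section
/- The phase-retrieval proximal operator: for c ≥ 0, t > 0, and nonzero z ∈ ℂ, the complex number x* = ((t/(1+t))|z| + (1/(1+t))c)·(z/|z|) minimizes x ↦ (1/2)(|x| − c)² + (t/2)|x − z|². -/
/-! The reverse triangle inequality gives `f x ≥ g ‖x‖` for the radial profile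
`g s = ½ (s - c)² + (t/2) (s - ‖z‖)²`, with equality on the ray through `z`. The quadratic `g` is
minimized at `r = (t ‖z‖ + c) / (1 + t)`, which is nonnegative since `c ≥ 0`, and `x*` is the
point of norm `r` on that ray. -/

theorem radial_objective_eq_add_sq {a c t r : ℝ} (hr : (1 + t) * r = t * a + c) (s : ℝ) :
    1 / 2 * (s - c) ^ 2 + t / 2 * (s - a) ^ 2
      = 1 / 2 * (r - c) ^ 2 + t / 2 * (r - a) ^ 2 + (1 + t) / 2 * (s - r) ^ 2 := by
  linear_combination (s - r) * hr

theorem radial_objective_le {E : Type*} [SeminormedAddCommGroup E] (c : ℝ) {t : ℝ} (ht : 0 ≤ t)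
    (x z : E) :
    1 / 2 * (‖x‖ - c) ^ 2 + t / 2 * (‖x‖ - ‖z‖) ^ 2
      ≤ 1 / 2 * (‖x‖ - c) ^ 2 + t / 2 * ‖x - z‖ ^ 2 := by
  have h : (‖x‖ - ‖z‖) ^ 2 ≤ ‖x - z‖ ^ 2 :=
    sq_le_sq' (neg_le_of_abs_le (abs_norm_sub_norm_le x z)) (norm_sub_norm_le x z)
  gcongr

namespace Complex

theorem norm_ofReal_mul_div_norm (r : ℝ) {z : ℂ} (hz : z ≠ 0) : ‖(r : ℂ) * (z / ‖z‖)‖ = |r| := by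
  simp [hz]

theorem ofReal_mul_div_norm_sub_self (r : ℝ) {z : ℂ} (hz : z ≠ 0) :
    (r : ℂ) * (z / ‖z‖) - z = ((r - ‖z‖ : ℝ) : ℂ) * (z / ‖z‖) := by
  have : (‖z‖ : ℂ) ≠ 0 := by simpa using hz
  push_cast
  field_simp

end Complex

open Complex in
/-- the phase-retrieval proximal operator absProj minimizes the objective. -/
theorem absProj_minimizes (c t : ℝ) (hc : 0 ≤ c) (ht : 0 < t) (z : ℂ) (hz : z ≠ 0) :
    let f : ℂ → ℝ := fun x =>
      (1 / 2) * (‖x‖ - c) ^ 2 + (t / 2) * ‖x - z‖ ^ 2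
    let xstar : ℂ :=
      (((t / (1 + t)) * ‖z‖ + (1 / (1 + t)) * c : ℝ) : ℂ) *
        (z / (‖z‖ : ℂ))
    ∀ x : ℂ, f xstar ≤ f x := by
  intro f xstar x
  set r : ℝ := t / (1 + t) * ‖z‖ + 1 / (1 + t) * c
  have hr : (1 + t) * r = t * ‖z‖ + c := by
    simp only [r]
    field_simp
  have hr₀ : 0 ≤ r := by positivity
  have hf_xstar : f xstar = 1 / 2 * (r - c) ^ 2 + t / 2 * (r - ‖z‖) ^ 2 := by
    change 1 / 2 * (‖(r : ℂ) * (z / ‖z‖)‖ - c) ^ 2 + t / 2 * ‖(r : ℂ) * (z / ‖z‖) - z‖ ^ 2 = _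
    rw [ofReal_mul_div_norm_sub_self r hz, norm_ofReal_mul_div_norm _ hz,
      norm_ofReal_mul_div_norm _ hz, abs_of_nonneg hr₀, sq_abs]
  calc f xstar
      ≤ 1 / 2 * (r - c) ^ 2 + t / 2 * (r - ‖z‖) ^ 2 + (1 + t) / 2 * (‖x‖ - r) ^ 2 := by
        rw [hf_xstar]
        exact le_add_of_nonneg_right (by positivity)
    _ = 1 / 2 * (‖x‖ - c) ^ 2 + t / 2 * (‖x‖ - ‖z‖) ^ 2 := (radial_objective_eq_add_sq hr _).symm
    _ ≤ f x := radial_objective_le c ht.le x z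
end
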